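/- arXiv:1904.09748 — 3 statements merged into one kernel-verified Lean document; each statement's English description precedes it below -/
import Mathlib

section
/- For all integers m ≥ 0 and n ≥ 1, the number of 1-dimensional flats of the n-dimensional extended Catalan arrangement satisfies |L_1(C^m_n)| = ∑_{ℓ=1}^{n} ℓ! · S(n,ℓ) · m^{ℓ−1}. -/
open Set

/-- The affine hyperplane `{x : ℝⁿ | x i - x j = a}`. -/
def hyp (n : ℕ) (i j : Fin n) (a : ℤ) : Set (Fin n → ℝ) :=
  {x | x i - x j = (a : ℝ)}

/-- The extended Catalan arrangement `C^m_n`: hyperplanes `x_i - x_j = a` for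
`i < j` and `-m ≤ a ≤ m`. -/
def CatalanArr (m n : ℕ) : Set (Set (Fin n → ℝ)) :=
  {H | ∃ i j : Fin n, ∃ a : ℤ, i < j ∧ -(m : ℤ) ≤ a ∧ a ≤ (m : ℤ) ∧ H = hyp n i j a}

/-- The extended Shi arrangement `S^m_n`: hyperplanes `x_i - x_j = a` for
`i < j` and `1 - m ≤ a ≤ m`. -/
def ShiArr (m n : ℕ) : Set (Set (Fin n → ℝ)) :=
  {H | ∃ i j : Fin n, ∃ a : ℤ, 1 - (m : ℤ) ≤ a ∧ a ≤ (m : ℤ) ∧ i < j ∧ H = hyp n i j a}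

/-- The flats of an arrangement: nonempty intersections of subcollections
(the empty intersection being the whole space). -/
def flats {n : ℕ} (A : Set (Set (Fin n → ℝ))) : Set (Set (Fin n → ℝ)) :=
  {F | F.Nonempty ∧ ∃ B ⊆ A, F = ⋂₀ B}

/-- The dimension of a flat, i.e. the dimension of the affine subspace it spans. -/
noncomputable def flatDim {n : ℕ} (F : Set (Fin n → ℝ)) : ℕ :=
  Module.finrank ℝ (affineSpan ℝ F).direction

/-- The set of `k`-dimensional flats of an arrangement. -/
def Lk {n : ℕ} (A : Set (Set (Fin n → ℝ))) (k : ℕ) : Set (Set (Fin n → ℝ)) :=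
  {F | F ∈ flats A ∧ flatDim F = k}

/-- Stirling numbers of the second kind: `stirling2 n k` is the number of
partitions of an `n`-element set into `k` nonempty blocks. -/
def stirling2 : ℕ → ℕ → ℕ
  | 0, 0 => 1
  | 0, _ + 1 => 0
  | _ + 1, 0 => 0
  | n + 1, k + 1 => (k + 1) * stirling2 n (k + 1) + stirling2 n k

/-!
Through every point `x` there is a smallest flat of `C^m_n`, namely `x + W_x`, where
`W_x = catalanDir m x` consists of the vectors `w` with `w i = w j` whenever `x` lies on a
hyperplane `x_i - x_j = a` of the arrangement. As `W_x` always contains the diagonal `ℝ ∙ 1`,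
the one-dimensional flats are the lines `x + ℝ ∙ 1` for which the graph "`x_i - x_j ∈ {-m, …, m}`"
on the coordinates is connected. Connectivity forces integral coordinate differences whose
distinct values, sorted, have consecutive gaps in `[1, m]`. Normalising the least value to `0`,
such a line is determined by the number `ℓ` of distinct values, the surjection sending each
coordinate to the rank of its value (`ℓ! S(n, ℓ)` choices) and the `ℓ - 1` gaps
(`m ^ (ℓ - 1)` choices).
-/

open Module Function
open scoped Nat

variable {n : ℕ}

def diagLine (v : Fin n → ℝ) : AffineSubspace ℝ (Fin n → ℝ) :=
  AffineSubspace.mk' v (ℝ ∙ 1)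

lemma mem_diagLine_iff {v y : Fin n → ℝ} : y ∈ diagLine v ↔ ∃ t : ℝ, ∀ i, y i = v i + t := by
  simp only [diagLine, AffineSubspace.mem_mk', Submodule.mem_span_singleton, funext_iff,
    Pi.smul_apply, vsub_eq_sub, Pi.sub_apply, Pi.one_apply, smul_eq_mul, mul_one]
  exact exists_congr fun t => forall_congr' fun i => by constructor <;> intro h <;> linarith

lemma diagLine_eq_of_mem {v y : Fin n → ℝ} (h : y ∈ diagLine v) : diagLine y = diagLine v := by
  simpa [diagLine] using AffineSubspace.mk'_eq h

lemma flatDim_diagLine [NeZero n] (v : Fin n → ℝ) :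
    flatDim (diagLine v : Set (Fin n → ℝ)) = 1 := by
  rw [flatDim, AffineSubspace.affineSpan_coe, diagLine, AffineSubspace.direction_mk']
  exact finrank_span_singleton one_ne_zero

def CatalanAdj (m : ℕ) (x : Fin n → ℝ) (i j : Fin n) : Prop :=
  ∃ a : ℤ, |a| ≤ m ∧ x i - x j = a

lemma CatalanAdj.symm {m : ℕ} {x : Fin n → ℝ} {i j : Fin n} (h : CatalanAdj m x i j) :
    CatalanAdj m x j i := by
  obtain ⟨a, ha, hx⟩ := h
  exact ⟨-a, by rwa [abs_neg], by push_cast; linarith⟩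

def catalanDir (m : ℕ) (x : Fin n → ℝ) : Submodule ℝ (Fin n → ℝ) where
  carrier := {w | ∀ i j, CatalanAdj m x i j → w i = w j}
  add_mem' hw hw' i j h := by simp only [Pi.add_apply, hw i j h, hw' i j h]
  zero_mem' _ _ _ := rfl
  smul_mem' c w hw i j h := by simp only [Pi.smul_apply, hw i j h]

lemma span_one_le_catalanDir (m : ℕ) (x : Fin n → ℝ) : ℝ ∙ 1 ≤ catalanDir m x := by
  rw [Submodule.span_le, singleton_subset_iff]
  exact fun _ _ _ => rfl

lemma sInter_catalanArr_sep_mem (m : ℕ) (x : Fin n → ℝ) :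
    ⋂₀ {H ∈ CatalanArr m n | x ∈ H} = AffineSubspace.mk' x (catalanDir m x) := by
  ext y
  simp only [mem_sInter, mem_ofPred_eq, and_imp, SetLike.mem_coe, AffineSubspace.mem_mk']
  constructor
  · rintro hy i j ⟨a, ha, hxa⟩
    have hmem : ∀ i j (a : ℤ), i < j → |a| ≤ m → x i - x j = a → y i - y j = a :=
      fun i j a hij ha hxa => hy _ ⟨i, j, a, hij, (abs_le.1 ha).1, (abs_le.1 ha).2, rfl⟩ hxa
    show y i - x i = y j - x j
    rcases lt_trichotomy i j with hij | rfl | hij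
    · linarith [hmem i j a hij ha hxa]
    · rfl
    · have := hmem j i (-a) hij (by rwa [abs_neg]) (by push_cast; linarith)
      push_cast at this
      linarith
  · rintro hy H ⟨i, j, a, -, h1, h2, rfl⟩ (hxa : x i - x j = a)
    have := hy i j ⟨a, abs_le.2 ⟨h1, h2⟩, hxa⟩
    show y i - y j = a
    simp only [vsub_eq_sub, Pi.sub_apply] at this
    linarith

lemma mk'_catalanDir_subset {m : ℕ} {F : Set (Fin n → ℝ)} (hF : F ∈ flats (CatalanArr m n))
    {x : Fin n → ℝ} (hx : x ∈ F) : (AffineSubspace.mk' x (catalanDir m x) : Set _) ⊆ F := by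
  obtain ⟨-, B, hB, rfl⟩ := hF
  rw [← sInter_catalanArr_sep_mem]
  exact sInter_subset_sInter fun H hH => ⟨hB hH, hx H hH⟩

theorem mem_Lk_one_catalanArr_iff [NeZero n] {m : ℕ} {F : Set (Fin n → ℝ)} :
    F ∈ Lk (CatalanArr m n) 1 ↔ ∃ x : Fin n → ℝ, catalanDir m x ≤ ℝ ∙ 1 ∧ F = diagLine x := by
  constructor
  · rintro ⟨hF, hdim⟩
    obtain ⟨x, hx⟩ := hF.1
    have hsub := mk'_catalanDir_subset hF hx
    have hle : catalanDir m x ≤ (affineSpan ℝ F).direction := by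
      simpa using AffineSubspace.direction_le
        (show AffineSubspace.mk' x (catalanDir m x) ≤ affineSpan ℝ F from
          hsub.trans (subset_affineSpan ℝ F))
    have hspan : ℝ ∙ 1 = (affineSpan ℝ F).direction :=
      Submodule.eq_of_le_of_finrank_eq ((span_one_le_catalanDir m x).trans hle)
        (by rw [finrank_span_singleton one_ne_zero]; exact hdim.symm)
    have hdir : catalanDir m x = ℝ ∙ 1 := le_antisymm (hspan ▸ hle) (span_one_le_catalanDir m x)
    refine ⟨x, hdir.le, (subset_affineSpan ℝ F).trans ?_ |>.antisymm ?_⟩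
    · rw [← AffineSubspace.mk'_eq (mem_affineSpan ℝ hx), ← hspan]; rfl
    · rwa [diagLine, ← hdir]
  · rintro ⟨x, hx, rfl⟩
    have hdir : catalanDir m x = ℝ ∙ 1 := le_antisymm hx (span_one_le_catalanDir m x)
    refine ⟨⟨⟨x, AffineSubspace.self_mem_mk' _ _⟩, _, sep_subset _ fun H => x ∈ H, ?_⟩,
      flatDim_diagLine x⟩
    rw [sInter_catalanArr_sep_mem, hdir]; rfl

section Connectivity

variable {m : ℕ} {x : Fin n → ℝ}

/-- `catalanDir m x ≤ ℝ ∙ 1` says that the graph `CatalanAdj m x` is connected. -/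
lemma mem_of_catalanAdj_closed (h : catalanDir m x ≤ ℝ ∙ 1) {S : Set (Fin n)}
    (hS : ∀ i j, CatalanAdj m x i j → i ∈ S → j ∈ S) {i : Fin n} (hi : i ∈ S) (j : Fin n) :
    j ∈ S := by
  classical
  let w : Fin n → ℝ := fun k => if k ∈ S then 1 else 0
  have hw : w ∈ catalanDir m x := fun k l hkl => by
    simp only [w, if_congr ⟨hS k l hkl, hS l k hkl.symm⟩ rfl rfl]
  obtain ⟨c, hc⟩ := Submodule.mem_span_singleton.1 (h hw)
  have hij : w j = w i := by rw [← hc]; rfl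
  by_contra hj
  simp [w, hi, hj] at hij

lemma exists_int_of_catalanDir_le [NeZero n] (h : catalanDir m x ≤ ℝ ∙ 1) :
    ∃ (v : Fin n → ℤ) (t : ℝ), ∀ i, x i = v i + t := by
  have hint : ∀ i, ∃ z : ℤ, x i - x 0 = z := by
    refine mem_of_catalanAdj_closed h (S := {i | ∃ z : ℤ, x i - x 0 = z}) ?_ (i := 0)
      ⟨0, by simp⟩
    rintro i j ⟨a, -, ha⟩ ⟨z, hz⟩
    exact ⟨z - a, by push_cast; linarith⟩
  choose v hv using hint
  exact ⟨v, x 0, fun i => by linarith [hv i]⟩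

lemma exists_mem_Ioc_of_catalanDir_le (h : catalanDir m x ≤ ℝ ∙ 1) {v : Fin n → ℤ} {t : ℝ}
    (hv : ∀ i, x i = v i + t) {c : ℤ} {i j : Fin n} (hi : v i ≤ c) (hj : c < v j) :
    ∃ k, v k ∈ Ioc c (c + m) := by
  by_contra! hgap
  refine hj.not_ge (mem_of_catalanAdj_closed h (S := {k | v k ≤ c}) ?_ hi j)
  rintro k l ⟨a, ha, hkl⟩ (hk : v k ≤ c)
  have hvkl : v k - v l = a := by
    have : ((v k - v l : ℤ) : ℝ) = a := by rw [← hkl, hv, hv]; push_cast; ring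
    exact_mod_cast this
  have hl : ¬(c < v l ∧ v l ≤ c + m) := hgap l
  have := abs_le.1 ha
  show v l ≤ c
  omega

end Connectivity

section SortedValues

variable {α ι : Type*} [LinearOrder α]

lemma exists_strictMono_comp_surjective [Fintype ι] [Nonempty ι] (v : ι → α) :
    ∃ k, k < Fintype.card ι ∧ ∃ s : Fin (k + 1) → α, StrictMono s ∧
      ∃ f : ι → Fin (k + 1), Surjective f ∧ v = s ∘ f := by
  classical
  set T := Finset.univ.image v
  have hmem : ∀ i, v i ∈ T := fun i => Finset.mem_image_of_mem v (Finset.mem_univ i)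
  obtain ⟨k, hk⟩ := Nat.exists_eq_succ_of_ne_zero (Finset.univ_nonempty.image v).card_pos.ne'
  let e := T.orderIsoOfFin hk
  refine ⟨k, ?_, fun c => e c, fun a b hab => e.strictMono hab,
    fun i => e.symm ⟨v i, hmem i⟩, ?_, funext fun i => by simp⟩
  · exact Nat.lt_of_succ_le (hk ▸ Finset.card_image_le)
  · intro c
    obtain ⟨i, -, hi⟩ := Finset.mem_image.1 (e c).2
    exact ⟨i, by simp [hi]⟩

lemma card_eq_of_strictMono_comp_surjective_eq {a b : ℕ} {s : Fin a → α} {s' : Fin b → α}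
    (hs : StrictMono s) (hs' : StrictMono s') {f : ι → Fin a} {f' : ι → Fin b}
    (hf : Surjective f) (hf' : Surjective f') (h : s ∘ f = s' ∘ f') : a = b := by
  have hrange : range s = range s' := by rw [← hf.range_comp, h, hf'.range_comp]
  have := Nat.card_range_of_injective hs.injective
  rwa [hrange, Nat.card_range_of_injective hs'.injective, Nat.card_fin, Nat.card_fin,
    eq_comm] at this

lemma eq_of_strictMono_comp_surjective_eq {a : ℕ} {s s' : Fin a → α}
    (hs : StrictMono s) (hs' : StrictMono s') {f f' : ι → Fin a}
    (hf : Surjective f) (hf' : Surjective f') (h : s ∘ f = s' ∘ f') : s = s' ∧ f = f' := by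
  have hss' : s = s' := (hs.range_inj hs').1 (by rw [← hf.range_comp, h, hf'.range_comp])
  subst hss'
  exact ⟨rfl, funext fun i => hs.injective (congrFun h i)⟩

end SortedValues

section GapSums

variable {k m : ℕ}

def gapSums (g : Fin k → Fin m) : Fin (k + 1) → ℤ :=
  Fin.partialSum fun j => (g j : ℤ) + 1

lemma gapSums_succ (g : Fin k → Fin m) (j : Fin k) :
    gapSums g j.succ = gapSums g j.castSucc + ((g j : ℤ) + 1) :=
  Fin.partialSum_succ _ j

lemma strictMono_gapSums (g : Fin k → Fin m) : StrictMono (gapSums g) :=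
  Fin.strictMono_iff_lt_succ.2 fun j => by rw [gapSums_succ]; omega

lemma gapSums_nonneg (g : Fin k → Fin m) (c : Fin (k + 1)) : 0 ≤ gapSums g c := by
  simpa [gapSums] using (strictMono_gapSums g).monotone (Fin.zero_le c)

lemma gapSums_injective : Injective (gapSums (k := k) (m := m)) := by
  intro g g' h
  funext j
  have h₁ := gapSums_succ g j
  have h₂ := gapSums_succ g' j
  rw [h] at h₁
  exact Fin.ext (by omega)

lemma exists_gapSums_eq {s : Fin (k + 1) → ℤ} (hs : StrictMono s)
    (hgap : ∀ j : Fin k, s j.succ ≤ s j.castSucc + m) :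
    ∃ g : Fin k → Fin m, ∀ c, s c = s 0 + gapSums g c := by
  have hlt : ∀ j : Fin k, s j.castSucc < s j.succ := Fin.strictMono_iff_lt_succ.1 hs
  refine ⟨fun j => ⟨(s j.succ - s j.castSucc - 1).toNat, ?_⟩, fun c => ?_⟩
  · have := hgap j
    have := hlt j
    omega
  have hg : (fun j : Fin k => ((s j.succ - s j.castSucc - 1).toNat : ℤ) + 1) =
      fun j => -s j.castSucc + s j.succ := by
    funext j; have := hlt j; omega
  show s c = s 0 + Fin.partialSum (fun j => ((s j.succ - s j.castSucc - 1).toNat : ℤ) + 1) c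
  conv_lhs => rw [← Fin.partialSum_left_neg s]
  rw [hg]
  rfl

end GapSums

/-- A line of `C^m_n` is coded by the number `k + 1 ≤ n` of distinct values of its points'
coordinates, the rank of each coordinate among these values, and the gaps between consecutive
values. -/
abbrev LineCode (m n : ℕ) :=
  Σ k : Fin n, {f : Fin n → Fin (k + 1) // Surjective f} × (Fin k → Fin m)

namespace LineCode

variable {m : ℕ}

def vec (d : LineCode m n) : Fin n → ℤ := fun i => gapSums d.2.2 (d.2.1.1 i)

def line (d : LineCode m n) : Set (Fin n → ℝ) := diagLine fun i => (d.vec i : ℝ)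

lemma vec_nonneg (d : LineCode m n) (i : Fin n) : 0 ≤ d.vec i := gapSums_nonneg _ _

lemma exists_vec_eq_zero (d : LineCode m n) : ∃ i, d.vec i = 0 := by
  obtain ⟨i, hi⟩ := d.2.1.2 0
  exact ⟨i, by simp [vec, hi, gapSums]⟩

lemma vec_injective : Injective (vec (m := m) (n := n)) := by
  rintro ⟨⟨k, hk⟩, ⟨f, hf⟩, g⟩ ⟨⟨k', hk'⟩, ⟨f', hf'⟩, g'⟩ h
  have h' : gapSums g ∘ f = gapSums g' ∘ f' := h
  obtain rfl : k = k' := Nat.succ_injective <| card_eq_of_strictMono_comp_surjective_eq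
    (strictMono_gapSums g) (strictMono_gapSums g') hf hf' h'
  obtain ⟨hg, rfl⟩ := eq_of_strictMono_comp_surjective_eq
    (strictMono_gapSums g) (strictMono_gapSums g') hf hf' h'
  obtain rfl := gapSums_injective hg
  rfl

lemma line_injective : Injective (line (m := m) (n := n)) := by
  intro d d' h
  have hmem : (fun i => (d.vec i : ℝ)) ∈ d'.line := h ▸ AffineSubspace.self_mem_mk' _ _
  obtain ⟨t, ht⟩ := mem_diagLine_iff.1 hmem
  obtain ⟨i, hi⟩ := d.exists_vec_eq_zero
  obtain ⟨i', hi'⟩ := d'.exists_vec_eq_zero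
  have hnonneg : ∀ (e : LineCode m n) j, (0 : ℝ) ≤ e.vec j := fun e j => by
    exact_mod_cast e.vec_nonneg j
  have ht₀ : t = 0 := by
    have h₁ := ht i
    have h₂ := ht i'
    rw [hi] at h₁
    rw [hi'] at h₂
    push_cast at h₁ h₂
    linarith [hnonneg d' i, hnonneg d i']
  exact vec_injective (funext fun j => by exact_mod_cast (by simpa [ht₀] using ht j))

/-- Consecutive value classes of `d.vec` are joined, their gap being at most `m`. -/
lemma catalanDir_vec_le (d : LineCode m n) :
    catalanDir m (fun i => (d.vec i : ℝ)) ≤ ℝ ∙ 1 := by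
  obtain ⟨⟨k, hk⟩, ⟨f, hf⟩, g⟩ := d
  intro w hw
  have hadj : ∀ i j, |gapSums g (f i) - gapSums g (f j)| ≤ m → w i = w j := fun i j h =>
    hw i j ⟨_, h, by simp [vec]⟩
  let r := surjInv hf
  have hr : ∀ c, f (r c) = c := surjInv_eq hf
  have hfib : ∀ i, w i = w (r (f i)) := fun i => hadj _ _ (by simp [hr])
  have hcls : ∀ c, w (r c) = w (r 0) := by
    refine Fin.induction rfl fun c ih => ?_
    rw [← ih]
    refine hadj _ _ (abs_le.2 ?_)
    simp only [hr, gapSums_succ]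
    omega
  refine Submodule.mem_span_singleton.2 ⟨w (r 0), funext fun i => ?_⟩
  simp [hfib i, hcls]

lemma exists_line_eq [NeZero n] {x : Fin n → ℝ}
    (h : catalanDir m x ≤ ℝ ∙ 1) : ∃ d : LineCode m n, d.line = diagLine x := by
  obtain ⟨v, t, hv⟩ := exists_int_of_catalanDir_le h
  obtain ⟨k, hk, s, hs, f, hf, rfl⟩ := exists_strictMono_comp_surjective v
  rw [Fintype.card_fin] at hk
  have hgap : ∀ j : Fin k, s j.succ ≤ s j.castSucc + m := by
    intro j
    obtain ⟨i, hi⟩ := hf j.castSucc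
    obtain ⟨i', hi'⟩ := hf j.succ
    obtain ⟨l, hl, hlm⟩ := exists_mem_Ioc_of_catalanDir_le h hv (c := s j.castSucc) (i := i)
      (j := i') (by simp [hi]) (by simpa [hi'] using hs (Fin.castSucc_lt_succ (i := j)))
    have : j.succ ≤ f l := Fin.castSucc_lt_iff_succ_le.1 (hs.lt_iff_lt.1 hl)
    exact (hs.monotone this).trans hlm
  obtain ⟨g, hg⟩ := exists_gapSums_eq hs hgap
  refine ⟨⟨⟨k, hk⟩, ⟨f, hf⟩, g⟩,
    congrArg SetLike.coe (diagLine_eq_of_mem (mem_diagLine_iff.2 ⟨s 0 + t, fun i => ?_⟩)).symm⟩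
  rw [hv, comp_apply, hg (f i)]
  push_cast [vec]
  ring

end LineCode

theorem Lk_one_catalanArr_eq_range [NeZero n] (m : ℕ) :
    Lk (CatalanArr m n) 1 = range (LineCode.line (m := m) (n := n)) := by
  ext F
  rw [mem_Lk_one_catalanArr_iff]
  constructor
  · rintro ⟨x, hx, rfl⟩
    obtain ⟨d, hd⟩ := LineCode.exists_line_eq hx
    exact ⟨d, hd⟩
  · rintro ⟨d, rfl⟩
    exact ⟨_, d.catalanDir_vec_le, rfl⟩

section Surjections

noncomputable def succAboveInv {ι : Type*} {k : ℕ} (a : Fin (k + 1)) (g : ι → Fin (k + 1))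
    (h : ∀ i, g i ≠ a) : ι → Fin k :=
  fun i => (Fin.exists_succAbove_eq (h i)).choose

lemma succAbove_succAboveInv {ι : Type*} {k : ℕ} (a : Fin (k + 1)) (g : ι → Fin (k + 1))
    (h : ∀ i, g i ≠ a) (i : ι) : a.succAbove (succAboveInv a g h i) = g i :=
  (Fin.exists_succAbove_eq (h i)).choose_spec

lemma apply_castSucc_ne_last_of_not_surjective {n k : ℕ} {f : Fin (n + 1) → Fin k}
    (hf : Surjective f) (hg : ¬ Surjective (f ∘ Fin.castSucc)) (i : Fin n) :
    f i.castSucc ≠ f (Fin.last n) := by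
  refine fun h => hg fun b => ?_
  obtain ⟨x, rfl⟩ := hf b
  rcases Fin.eq_castSucc_or_eq_last x with ⟨y, rfl⟩ | rfl
  · exact ⟨y, rfl⟩
  · exact ⟨i, h⟩

/-- A surjection `Fin (n + 1) → Fin (k + 1)` is its last value together with its restriction to
`Fin n`, which is either still surjective or a surjection onto the other `k` values. -/
noncomputable def surjectiveFinSuccEquiv (n k : ℕ) :
    {f : Fin (n + 1) → Fin (k + 1) // Surjective f} ≃
      Fin (k + 1) × ({f : Fin n → Fin (k + 1) // Surjective f} ⊕
        {f : Fin n → Fin k // Surjective f}) where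
  toFun f :=
    ⟨f.1 (Fin.last n),
      if hg : Surjective (f.1 ∘ Fin.castSucc) then .inl ⟨_, hg⟩
      else .inr ⟨succAboveInv _ _ (apply_castSucc_ne_last_of_not_surjective f.2 hg), by
        intro c
        obtain ⟨x, hx⟩ := f.2 ((f.1 (Fin.last n)).succAbove c)
        rcases Fin.eq_castSucc_or_eq_last x with ⟨y, rfl⟩ | rfl
        · refine ⟨y, Fin.succAbove_right_injective (p := f.1 (Fin.last n)) ?_⟩
          rw [succAbove_succAboveInv, ← hx]
        · exact absurd hx.symm (Fin.succAbove_ne _ _)⟩⟩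
  invFun p :=
    match p with
    | ⟨a, .inl g⟩ => ⟨Fin.snoc g.1 a, by
        intro b
        obtain ⟨y, hy⟩ := g.2 b
        exact ⟨y.castSucc, by simpa using hy⟩⟩
    | ⟨a, .inr g⟩ => ⟨Fin.snoc (fun i => a.succAbove (g.1 i)) a, by
        intro b
        rcases eq_or_ne b a with rfl | hb
        · exact ⟨Fin.last n, by simp⟩
        · obtain ⟨c, rfl⟩ := Fin.exists_succAbove_eq hb
          obtain ⟨y, rfl⟩ := g.2 c
          exact ⟨y.castSucc, by simp⟩⟩
  left_inv f := by
    by_cases hg : Surjective (f.1 ∘ Fin.castSucc)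
    · simp only [dif_pos hg]
      ext x
      refine Fin.lastCases ?_ (fun i => ?_) x <;> simp
    · simp only [dif_neg hg]
      ext x
      refine Fin.lastCases ?_ (fun i => ?_) x <;> simp [succAbove_succAboveInv]
  right_inv p := by
    rcases p with ⟨a, g | g⟩
    · have hg : Surjective ((Fin.snoc g.1 a : Fin (n + 1) → Fin (k + 1)) ∘ Fin.castSucc) := by
        simpa [comp_def] using g.2
      refine Prod.ext (by simp) ?_
      simp only [dif_pos hg]
      congr 1
      ext i
      simp
    · have hg : ¬ Surjective ((Fin.snoc (fun i => a.succAbove (g.1 i)) a :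
          Fin (n + 1) → Fin (k + 1)) ∘ Fin.castSucc) := by
        intro hs
        obtain ⟨y, hy⟩ := hs a
        simp at hy
      refine Prod.ext (by simp) ?_
      simp only [dif_neg hg]
      congr 1
      ext i : 2
      refine Fin.succAbove_right_injective (p := (Fin.snoc (fun i => a.succAbove (g.1 i)) a :
        Fin (n + 1) → Fin (k + 1)) (Fin.last n)) ?_
      rw [succAbove_succAboveInv]
      simp

theorem card_surjective_fin (n k : ℕ) :
    Fintype.card {f : Fin n → Fin k // Surjective f} = k ! * stirling2 n k := by
  induction n generalizing k with
  | zero =>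
    cases k with
    | zero =>
      rw [Fintype.card_eq_one_iff.2 ⟨⟨Fin.elim0, fun b => b.elim0⟩, fun f => by
        ext i; exact i.elim0⟩]
      rfl
    | succ k =>
      rw [Fintype.card_eq_zero_iff.2 ⟨fun f => (f.2 0).choose.elim0⟩]
      rfl
  | succ n ih =>
    cases k with
    | zero =>
      rw [Fintype.card_eq_zero_iff.2 ⟨fun f => (f.1 0).elim0⟩]
      rfl
    | succ k =>
      rw [Fintype.card_congr (surjectiveFinSuccEquiv n k), Fintype.card_prod, Fintype.card_sum,
        ih, ih, Fintype.card_fin, stirling2, Nat.factorial_succ]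
      ring

end Surjections

lemma card_lineCode (m n : ℕ) :
    Fintype.card (LineCode m n) = ∑ l ∈ Finset.Icc 1 n, l ! * stirling2 n l * m ^ (l - 1) := by
  simp only [Fintype.card_sigma, Fintype.card_prod, card_surjective_fin, Fintype.card_fun,
    Fintype.card_fin]
  rw [Fin.sum_univ_eq_sum_range (fun k => (k + 1)! * stirling2 n (k + 1) * m ^ k),
    ← Finset.Ico_add_one_right_eq_Icc, Finset.sum_Ico_eq_sum_range]
  simp [add_comm]

/-- `|L_1(C^m_n)| = ∑_{ℓ=1}^{n} ℓ! · S(n,ℓ) · m^(ℓ-1)`. -/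
theorem catalan_one_flat_count (m n : ℕ) (hn : 1 ≤ n) :
    (Lk (CatalanArr m n) 1).ncard =
      ∑ l ∈ Finset.Icc 1 n, l.factorial * stirling2 n l * m ^ (l - 1) := by
  have : NeZero n := ⟨by omega⟩
  rw [Lk_one_catalanArr_eq_range, ← image_univ,
    ncard_image_of_injective _ LineCode.line_injective, ncard_univ, Nat.card_eq_fintype_card,
    card_lineCode]
end

section
/- Fix an integer n ≥ 1. The map sending a pair (σ, α) — where σ = (B_1, …, B_ℓ) is an ordered set partition of {1, …, n} (a finite list of pairwise disjoint nonempty subsets whose union is {1, …, n}) and α = (α_1, …, α_{ℓ−1}) is a list of positive integers with length one less than that of σ — to the function h : {1, …, n} → ℕ defined by h(v) = α_1 + ⋯ + α_{i−1} for v ∈ B_i, is a bijection from the set of all such pairs onto the set of functions h : {1, …, n} → ℕ whose range contains 0. -/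
/-!
The values of the height function of `(σ, α)` are the partial sums `α_1 + ⋯ + α_{i-1}`, which
strictly increase with `i` because `α` is positive; hence the blocks of `σ` are exactly the level
sets of the height function. Conversely, a function `h` with `0` in its range is the height
function of the pair obtained by listing its values `0 = c_1 < ⋯ < c_ℓ`, taking the level sets
`h⁻¹(c_i)` as blocks and the gaps `c_{i+1} - c_i` as `α`.
-/

open Set

namespace List

theorem strictMonoOn_sum_take {l : List ℕ} (hl : ∀ a ∈ l, 0 < a) :
    StrictMonoOn (fun i => (l.take i).sum) (Set.Iic l.length) :=
  strictMonoOn_Iic_of_lt_succ fun i hi => by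
    rw [Order.succ_eq_add_one, sum_take_succ _ _ hi]
    exact Nat.lt_add_of_pos_right (hl _ (getElem_mem hi))

theorem sum_take_zipWith_sub_add_getElem_zero {l : List ℕ} (hl : l.SortedLE)
    {j : ℕ} (hj : j < l.length) :
    ((zipWith (· - ·) l.tail l).take j).sum + l[0] = l[j] := by
  induction j with
  | zero => simp
  | succ j ih =>
    have hstep : l[j] ≤ l[j + 1] := hl.getElem_le_getElem_of_le (Nat.le_succ j)
    rw [sum_take_succ _ _ (by simp; omega), getElem_zipWith, getElem_tail,
      add_right_comm, ih (by omega)]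
    omega

theorem zipWith_sub_tail_map_sum_take (l : List ℕ) :
    zipWith (· - ·) ((range (l.length + 1)).map fun i => (l.take i).sum).tail
      ((range (l.length + 1)).map fun i => (l.take i).sum) = l := by
  refine ext_getElem (by simp) fun i _ hi => ?_
  simp only [getElem_zipWith, getElem_tail, getElem_map, getElem_range, sum_take_succ _ _ hi]
  omega

theorem findIdx_mem_eq_of_pairwise_disjoint {α : Type*} [DecidableEq α] {σ : List (Finset α)}
    (hσ : σ.Pairwise _root_.Disjoint) {v : α} {i : ℕ} (hi : i < σ.length) (hv : v ∈ σ[i]) :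
    σ.findIdx (fun B => decide (v ∈ B)) = i := by
  rw [findIdx_eq hi]
  refine ⟨by simpa using hv, fun j hj => decide_eq_false fun hvj => ?_⟩
  exact Finset.disjoint_left.mp (pairwise_iff_getElem.mp hσ j i _ hi hj) hvj hv

end List

namespace HeightFunction

variable {V : Type*}

def heightData (V : Type*) : Set (List (Finset V) × List ℕ) :=
  {p | (∀ B ∈ p.1, B.Nonempty) ∧ p.1.Pairwise Disjoint ∧ (∀ v : V, ∃ B ∈ p.1, v ∈ B) ∧
    (∀ a ∈ p.2, 0 < a) ∧ p.2.length + 1 = p.1.length}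

theorem strictMonoOn_sum_take_of_mem {p : List (Finset V) × List ℕ} (hp : p ∈ heightData V) :
    StrictMonoOn (fun i => (p.2.take i).sum) (Set.Iio p.1.length) := by
  obtain ⟨-, -, -, hpos, hlen⟩ := hp
  exact (List.strictMonoOn_sum_take hpos).mono fun i (hi : i < _) => show i ≤ _ by omega

section HeightFun

variable [DecidableEq V]

def heightFun (p : List (Finset V) × List ℕ) (v : V) : ℕ :=
  (p.2.take (p.1.findIdx fun B => decide (v ∈ B))).sum

theorem heightFun_eq_of_mem {p : List (Finset V) × List ℕ} (hp : p.1.Pairwise Disjoint)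
    {i : ℕ} (hi : i < p.1.length) {v : V} (hv : v ∈ p.1[i]) :
    heightFun p v = (p.2.take i).sum := by
  rw [heightFun, List.findIdx_mem_eq_of_pairwise_disjoint hp hi hv]

theorem heightFun_eq_iff_mem {p : List (Finset V) × List ℕ} (hp : p ∈ heightData V) {i : ℕ}
    (hi : i < p.1.length) {v : V} : heightFun p v = (p.2.take i).sum ↔ v ∈ p.1[i] := by
  refine ⟨fun hv => ?_, heightFun_eq_of_mem hp.2.1 hi⟩
  obtain ⟨B, hB, hvB⟩ := hp.2.2.1 v
  obtain ⟨j, hj, rfl⟩ := List.getElem_of_mem hB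
  rw [heightFun_eq_of_mem hp.2.1 hj hvB] at hv
  obtain rfl := (strictMonoOn_sum_take_of_mem hp).injOn hj hi hv
  exact hvB

theorem range_heightFun {p : List (Finset V) × List ℕ} (hp : p ∈ heightData V) :
    range (heightFun p) = (fun i => (p.2.take i).sum) '' Set.Iio p.1.length := by
  obtain ⟨hne, hdisj, hcov, -, -⟩ := hp
  ext c
  constructor
  · rintro ⟨v, rfl⟩
    obtain ⟨B, hB, hvB⟩ := hcov v
    obtain ⟨i, hi, rfl⟩ := List.getElem_of_mem hB
    exact ⟨i, hi, (heightFun_eq_of_mem hdisj hi hvB).symm⟩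
  · rintro ⟨i, hi, rfl⟩
    obtain ⟨v, hv⟩ := hne _ (p.1.getElem_mem hi)
    exact ⟨v, heightFun_eq_of_mem hdisj hi hv⟩

theorem mapsTo_heightFun : MapsTo heightFun (heightData V) {h : V → ℕ | 0 ∈ range h} := by
  intro p hp
  show 0 ∈ range _
  rw [range_heightFun hp]
  exact ⟨0, hp.2.2.2.2 ▸ Nat.succ_pos _, by simp⟩

end HeightFun

section Levels

variable [Fintype V]

def levels (h : V → ℕ) : List ℕ := (Finset.univ.image h).sort (· ≤ ·)

theorem mem_levels {h : V → ℕ} {c : ℕ} : c ∈ levels h ↔ c ∈ range h := by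
  simp [levels]

theorem levels_sortedLT (h : V → ℕ) : (levels h).SortedLT := Finset.sortedLT_sort _

def heightFunInv (h : V → ℕ) : List (Finset V) × List ℕ :=
  ((levels h).map fun c => Finset.univ.filter (h · = c),
    List.zipWith (· - ·) (levels h).tail (levels h))

theorem heightFunInv_mem {h : V → ℕ} (h0 : 0 ∈ range h) : heightFunInv h ∈ heightData V := by
  refine ⟨?_, ?_, fun v => ?_, fun a ha => ?_, ?_⟩
  · simp only [heightFunInv, List.mem_map]
    rintro _ ⟨c, hc, rfl⟩
    obtain ⟨v, rfl⟩ := mem_levels.mp hc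
    exact ⟨v, by simp⟩
  · exact (levels_sortedLT h).pairwise.map _ fun a b hab =>
      Finset.disjoint_filter.mpr fun v _ hva hvb => hab.ne (hva.symm.trans hvb)
  · exact ⟨_, List.mem_map_of_mem (mem_levels.mpr ⟨v, rfl⟩), by simp⟩
  · obtain ⟨i, hi, rfl⟩ := List.getElem_of_mem ha
    simp only [heightFunInv, List.length_zipWith, List.length_tail] at hi ⊢
    rw [List.getElem_zipWith, List.getElem_tail, Nat.sub_pos_iff_lt]
    exact (levels_sortedLT h).getElem_lt_getElem_of_lt (Nat.lt_add_one i)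
  · have : 0 < (levels h).length := List.length_pos_of_mem (mem_levels.mpr h0)
    simp only [heightFunInv, List.length_map, List.length_zipWith, List.length_tail]
    omega

variable [DecidableEq V]

theorem levels_heightFun {p : List (Finset V) × List ℕ} (hp : p ∈ heightData V) :
    levels (heightFun p) = (List.range p.1.length).map fun i => (p.2.take i).sum := by
  refine (levels_sortedLT _).eq_of_mem_iff ?_ fun c => ?_
  · refine List.sortedLT_iff_pairwise.mpr (List.pairwise_map.mpr ?_)
    exact List.pairwise_lt_range.imp_of_mem fun hi hj hij =>
      strictMonoOn_sum_take_of_mem hp (List.mem_range.mp hi) (List.mem_range.mp hj) hij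
  · simp [mem_levels, range_heightFun hp]

theorem leftInvOn_heightFunInv : LeftInvOn heightFunInv heightFun (heightData V) := by
  rintro ⟨σ, α⟩ hp
  have hlen : α.length + 1 = σ.length := hp.2.2.2.2
  rw [heightFunInv, levels_heightFun hp, List.map_map, Prod.mk.injEq]
  refine ⟨List.ext_getElem (by simp) fun i hi _ => ?_, ?_⟩
  · ext v
    simpa using heightFun_eq_iff_mem hp (by simpa using hi)
  · simpa [← hlen] using List.zipWith_sub_tail_map_sum_take α

theorem rightInvOn_heightFunInv :
    RightInvOn heightFunInv heightFun {h : V → ℕ | 0 ∈ range h} := by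
  intro h h0
  have hle := (levels_sortedLT h).sortedLE
  obtain ⟨k, hk, hk0⟩ := List.getElem_of_mem (mem_levels.mpr h0)
  have hbot : (levels h)[0] = 0 := by
    have : (levels h)[0] ≤ (levels h)[k] := hle.getElem_le_getElem_of_le k.zero_le
    omega
  funext v
  obtain ⟨i, hi, hvi⟩ := List.getElem_of_mem (mem_levels.mpr ⟨v, rfl⟩)
  have hv : v ∈ (heightFunInv h).1[i]'(by simpa [heightFunInv] using hi) := by
    simp [heightFunInv, hvi]
  rw [heightFun_eq_of_mem (heightFunInv_mem h0).2.1 _ hv, ← hvi,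
    ← List.sum_take_zipWith_sub_add_getElem_zero hle hi, hbot]
  rfl

theorem bijOn_heightFun : BijOn heightFun (heightData V) {h : V → ℕ | 0 ∈ range h} :=
  InvOn.bijOn ⟨leftInvOn_heightFunInv, rightInvOn_heightFunInv⟩ mapsTo_heightFun
    fun _ h0 => heightFunInv_mem h0

end Levels

end HeightFunction

theorem height_function_bij_general (n : ℕ) :
    Set.BijOn
      (fun p : List (Finset (Fin n)) × List ℕ =>
        fun v : Fin n => (p.2.take (p.1.findIdx fun B => decide (v ∈ B))).sum)
      {p : List (Finset (Fin n)) × List ℕ |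
        (∀ B ∈ p.1, B.Nonempty) ∧ p.1.Pairwise Disjoint ∧
          (∀ v : Fin n, ∃ B ∈ p.1, v ∈ B) ∧
          (∀ a ∈ p.2, 0 < a) ∧ p.2.length + 1 = p.1.length}
      {h : Fin n → ℕ | 0 ∈ Set.range h} :=
  HeightFunction.bijOn_heightFun

/-- The map sending a pair `(σ, α)` — an ordered set partition `σ = (B_1, …, B_ℓ)` of
`{1,…,n}` together with a list `α = (α_1, …, α_{ℓ-1})` of positive integers of length one
less than `σ` — to the function `h` with `h v = α_1 + ⋯ + α_{i-1}` for `v ∈ B_i` is a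
bijection onto the functions `h : {1,…,n} → ℕ` whose range contains `0`. -/
theorem height_function_bij (n : ℕ) (hn : 1 ≤ n) :
    Set.BijOn
      (fun p : List (Finset (Fin n)) × List ℕ =>
        fun v : Fin n => (p.2.take (p.1.findIdx fun B => decide (v ∈ B))).sum)
      {p : List (Finset (Fin n)) × List ℕ |
        (∀ B ∈ p.1, B.Nonempty) ∧ p.1.Pairwise Disjoint ∧
          (∀ v : Fin n, ∃ B ∈ p.1, v ∈ B) ∧
          (∀ a ∈ p.2, 0 < a) ∧ p.2.length + 1 = p.1.length}
      {h : Fin n → ℕ | 0 ∈ Set.range h} :=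
  height_function_bij_general n
end

section
/- Let f, g ∈ ℚ⟦X⟧ be formal power series with zero constant term, and for such a series u and integers i, j ≥ 1 define T(u)_{ij} = j! · (coefficient of X^j in u^i) / i!. Then T(u)_{ij} = 0 whenever i > j, and for all i, j ≥ 1 one has T(f ∘ g)_{ij} = ∑_{k=i}^{j} T(f)_{ik} · T(g)_{kj}, where f ∘ g denotes the substitution of g into f (well defined since g has zero constant term). -/
/-!
Substitution `f ↦ f ∘ g` is a ring homomorphism, so `(f ∘ g)^i = f^i ∘ g`, and expanding the
coefficient of `X^j` gives `∑_k [X^k] f^i · [X^j] g^k`. For series without constant term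
`[X^k] f^i = 0` when `k < i`, which cuts the sum down to `i ≤ k ≤ j`; the factorials of
`T(f)_{ik} · T(g)_{kj}` then telescope to `j! / i!`.
-/

open Set

/-- Substitution of the power series `g` (with zero constant term) into `f`:
the coefficient of `X^N` in `f ∘ g` is `∑_{i ≤ N} (coeff i f) · (coeff N (g^i))`
(for `g` with zero constant term, `coeff N (g^i) = 0` whenever `i > N`). -/
noncomputable def psSubst (g f : PowerSeries ℚ) : PowerSeries ℚ :=
  PowerSeries.mk fun N =>
    ∑ i ∈ Finset.range (N + 1), PowerSeries.coeff i f * PowerSeries.coeff N (g ^ i)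

/-- `T(u)_{ij} = j! · (coefficient of X^j in u^i) / i!`. -/
noncomputable def psT (u : PowerSeries ℚ) (i j : ℕ) : ℚ :=
  (j.factorial : ℚ) * PowerSeries.coeff j (u ^ i) / (i.factorial : ℚ)

namespace PowerSeries

variable {R : Type*} [CommRing R]

theorem coeff_pow_eq_zero_of_lt {u : R⟦X⟧} (hu : constantCoeff u = 0) {i j : ℕ} (h : j < i) :
    coeff j (u ^ i) = 0 :=
  coeff_of_lt_order _ ((Nat.cast_lt.2 h).trans_le (le_order_pow_of_constantCoeff_eq_zero i hu))

theorem coeff_subst_eq_sum_range {g : R⟦X⟧} (hg : constantCoeff g = 0) (f : R⟦X⟧) (n : ℕ) :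
    coeff n (f.subst g) = ∑ k ∈ Finset.range (n + 1), coeff k f * coeff n (g ^ k) := by
  rw [coeff_subst' (HasSubst.of_constantCoeff_zero' hg)]
  refine finsum_eq_sum_of_support_subset _ fun k hk => ?_
  rw [Finset.coe_range, mem_Iio]
  by_contra! hnk
  exact hk (by simp only [coeff_pow_eq_zero_of_lt hg (Nat.lt_of_succ_le hnk), smul_zero])

theorem coeff_subst_pow_eq_sum_Icc {f g : R⟦X⟧} (hf : constantCoeff f = 0)
    (hg : constantCoeff g = 0) (i j : ℕ) :
    coeff j (f.subst g ^ i) = ∑ k ∈ Finset.Icc i j, coeff k (f ^ i) * coeff j (g ^ k) := by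
  rw [← subst_pow (HasSubst.of_constantCoeff_zero' hg), coeff_subst_eq_sum_range hg]
  refine (Finset.sum_subset (fun k hk => ?_) fun k hk hki => ?_).symm
  · simp only [Finset.mem_Icc, Finset.mem_range] at hk ⊢
    omega
  · simp only [Finset.mem_Icc, Finset.mem_range, not_and, not_le] at hk hki
    rw [coeff_pow_eq_zero_of_lt hf (by omega), zero_mul]

end PowerSeries

theorem psSubst_eq_subst {g : PowerSeries ℚ} (hg : PowerSeries.constantCoeff g = 0)
    (f : PowerSeries ℚ) : psSubst g f = f.subst g := by
  ext n
  rw [PowerSeries.coeff_subst_eq_sum_range hg, psSubst, PowerSeries.coeff_mk]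

/-- For power series with zero constant term, `T(u)_{ij} = 0` whenever `i > j`, and
`T(f ∘ g)_{ij} = ∑_{k=i}^{j} T(f)_{ik} · T(g)_{kj}`. -/
theorem psT_mul (f g : PowerSeries ℚ)
    (hf : PowerSeries.constantCoeff f = 0)
    (hg : PowerSeries.constantCoeff g = 0) :
    (∀ u : PowerSeries ℚ, PowerSeries.constantCoeff u = 0 →
      ∀ i j : ℕ, 1 ≤ i → 1 ≤ j → j < i → psT u i j = 0) ∧
      ∀ i j : ℕ, 1 ≤ i → 1 ≤ j →
        psT (psSubst g f) i j = ∑ k ∈ Finset.Icc i j, psT f i k * psT g k j := by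
  refine ⟨fun u hu i j _ _ hji => ?_, fun i j _ _ => ?_⟩
  · rw [psT, PowerSeries.coeff_pow_eq_zero_of_lt hu hji, mul_zero, zero_div]
  · rw [psT, psSubst_eq_subst hg, PowerSeries.coeff_subst_pow_eq_sum_Icc hf hg, Finset.mul_sum,
      Finset.sum_div]
    refine Finset.sum_congr rfl fun k _ => ?_
    rw [psT, psT]
    field_simp
end
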